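/- For α > 2, s > 0, P > 0, the improper integral ∫₀^∞ 2π r / (1 + r^α/(s P)) dr equals π (s P)^{2/α} / sinc(2/α), where sinc(x) = sin(π x)/(π x). -/

import Mathlib

open MeasureTheory Real Set

noncomputable section

/-- `sinc x = sin (π x) / (π x)`. -/
def rsinc (x : ℝ) : ℝ := Real.sin (π * x) / (π * x)

/-! The substitution `y = r ^ α / (s P)` turns the integral into `2π (sP)^(2/α) / α` times
`∫₀^∞ t^(a-1) / (1 + t) dt` with `a = 2/α ∈ (0, 1)`. The substitution `t = x / (1 - x)` identifies
the latter with the Beta integral `B(a, 1 - a) = Γ(a) Γ(1 - a)`, which is `π / sin (π a)` by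
Euler's reflection formula. -/

theorem integral_rpow_mul_one_sub_rpow {u v : ℝ} (hu : 0 < u) (hv : 0 < v) :
    ∫ x in (0 : ℝ)..1, x ^ (u - 1) * (1 - x) ^ (v - 1) = Gamma u * Gamma v / Gamma (u + v) := by
  have hcast : Complex.betaIntegral u v =
      ↑(∫ x in (0 : ℝ)..1, x ^ (u - 1) * (1 - x) ^ (v - 1)) := by
    rw [Complex.betaIntegral, ← intervalIntegral.integral_ofReal]
    refine intervalIntegral.integral_congr fun x hx => ?_
    obtain ⟨hx0, hx1⟩ : 0 ≤ x ∧ x ≤ 1 := by simpa using hx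
    push_cast
    rw [Complex.ofReal_cpow hx0, Complex.ofReal_cpow (sub_nonneg.2 hx1)]
    push_cast
    rfl
  have hbeta := Complex.betaIntegral_eq_Gamma_mul_div u v (by simpa) (by simpa)
  rw [hcast, ← Complex.ofReal_add] at hbeta
  simp only [Complex.Gamma_ofReal] at hbeta
  exact_mod_cast hbeta

theorem integral_Ioi_eq_integral_Ioo_div_one_sub {E : Type*} [NormedAddCommGroup E]
    [NormedSpace ℝ E] (f : ℝ → E) :
    ∫ t in Ioi (0 : ℝ), f t = ∫ x in Ioo (0 : ℝ) 1, ((1 - x) ^ 2)⁻¹ • f (x / (1 - x)) := by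
  have himage : (fun x : ℝ => x / (1 - x)) '' Ioo 0 1 = Ioi 0 := by
    ext t
    simp only [mem_image, mem_Ioi, mem_Ioo]
    constructor
    · rintro ⟨x, ⟨hx0, hx1⟩, rfl⟩
      exact div_pos hx0 (by linarith)
    · intro ht
      refine ⟨t / (1 + t), ⟨by positivity, by rw [div_lt_one (by linarith)]; linarith⟩, ?_⟩
      field_simp
      ring
  have hderiv : ∀ x ∈ Ioo (0 : ℝ) 1,
      HasDerivWithinAt (fun x : ℝ => x / (1 - x)) ((1 - x) ^ 2)⁻¹ (Ioo 0 1) x := by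
    rintro x ⟨-, hx1⟩
    have h1x : 1 - x ≠ 0 := by linarith
    refine ((hasDerivAt_id' x).div ((hasDerivAt_id' x).const_sub 1) h1x).hasDerivWithinAt
      |>.congr_deriv ?_
    field_simp
    ring
  have hinj : InjOn (fun x : ℝ => x / (1 - x)) (Ioo 0 1) := by
    rintro x ⟨-, hx1⟩ y ⟨-, hy1⟩ h
    rw [div_eq_div_iff (by linarith) (by linarith)] at h
    nlinarith
  rw [← himage, integral_image_eq_integral_abs_deriv_smul measurableSet_Ioo hderiv hinj]
  refine setIntegral_congr_fun measurableSet_Ioo fun x _ => ?_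
  rw [abs_of_nonneg (by positivity)]

theorem integral_Ioi_rpow_div_one_add_rpow {u v : ℝ} (hu : 0 < u) (hv : 0 < v) :
    ∫ t in Ioi (0 : ℝ), t ^ (u - 1) / (1 + t) ^ (u + v) = Gamma u * Gamma v / Gamma (u + v) := by
  rw [integral_Ioi_eq_integral_Ioo_div_one_sub, ← integral_rpow_mul_one_sub_rpow hu hv,
    intervalIntegral.integral_of_le zero_le_one, integral_Ioc_eq_integral_Ioo]
  refine setIntegral_congr_fun measurableSet_Ioo fun x ⟨hx0, hx1⟩ => ?_
  have hy : 0 < 1 - x := by linarith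
  have hsplit : (1 - x) ^ (u + v) = (1 - x) ^ 2 * (1 - x) ^ (u - 1) * (1 - x) ^ (v - 1) := by
    rw [← rpow_natCast, ← rpow_add hy, ← rpow_add hy]
    congr 1
    push_cast
    ring
  have hone_add : 1 + x / (1 - x) = (1 - x)⁻¹ := by field_simp; ring
  rw [smul_eq_mul, hone_add, inv_rpow hy.le, div_rpow hx0.le hy.le, hsplit]
  have := rpow_pos_of_pos hy (u - 1)
  have := rpow_pos_of_pos hy (v - 1)
  field_simp

theorem integral_Ioi_rpow_div_one_add {a : ℝ} (ha0 : 0 < a) (ha1 : a < 1) :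
    ∫ t in Ioi (0 : ℝ), t ^ (a - 1) / (1 + t) = π / sin (π * a) := by
  have h := integral_Ioi_rpow_div_one_add_rpow ha0 (sub_pos.2 ha1)
  simp only [add_sub_cancel, rpow_one, Gamma_one, div_one] at h
  rw [h, Gamma_mul_Gamma_one_sub]

theorem integral_Ioi_rpow_div_one_add_rpow_div {α β c : ℝ} (hβ : 0 < β) (hβα : β < α)
    (hc : 0 < c) :
    ∫ r in Ioi (0 : ℝ), r ^ (β - 1) / (1 + r ^ α / c) =
      π * c ^ (β / α) / (α * sin (π * (β / α))) := by
  have hα : 0 < α := hβ.trans hβα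
  let g : ℝ → ℝ := fun y => α⁻¹ * (y ^ (β / α - 1) / (1 + y / c))
  have hpow : ∫ r in Ioi (0 : ℝ), r ^ (β - 1) / (1 + r ^ α / c) = ∫ y in Ioi (0 : ℝ), g y := by
    rw [← integral_comp_rpow_Ioi_of_pos (g := g) hα]
    refine setIntegral_congr_fun measurableSet_Ioi fun r (hr : 0 < r) => ?_
    have hexp : r ^ (α - 1) * (r ^ α) ^ (β / α - 1) = r ^ (β - 1) := by
      rw [← rpow_mul hr.le, ← rpow_add hr]
      congr 1
      field_simp
      ring
    rw [← hexp, smul_eq_mul]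
    simp only [g]
    field_simp
  have hscale : ∫ y in Ioi (0 : ℝ), g y =
      c * ∫ t in Ioi (0 : ℝ), α⁻¹ * c ^ (β / α - 1) * (t ^ (β / α - 1) / (1 + t)) := by
    rw [← smul_eq_mul, ← mul_zero c, ← integral_comp_mul_left_Ioi' g 0 hc, mul_zero]
    congr 1
    refine setIntegral_congr_fun measurableSet_Ioi fun t (ht : 0 < t) => ?_
    simp only [g, mul_rpow hc.le ht.le, mul_div_cancel_left₀ t hc.ne']
    ring
  rw [hpow, hscale, integral_const_mul,
    integral_Ioi_rpow_div_one_add (div_pos hβ hα) ((div_lt_one hα).2 hβα), rpow_sub_one hc.ne']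
  field_simp

/-- For `α > 2`, `s > 0`, `P > 0`:
`∫₀^∞ 2π r / (1 + r^α/(s P)) dr = π (s P)^(2/α) / sinc (2/α)`. -/
theorem integral_interference_kernel (α s P : ℝ) (hα : 2 < α) (hs : 0 < s) (hP : 0 < P) :
    ∫ r in Set.Ioi (0 : ℝ), 2 * π * r / (1 + r ^ α / (s * P)) =
      π * (s * P) ^ (2 / α) / rsinc (2 / α) := by
  have hkernel := integral_Ioi_rpow_div_one_add_rpow_div two_pos hα (mul_pos hs hP)
  rw [show (2 : ℝ) - 1 = 1 by norm_num] at hkernel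
  simp only [rpow_one] at hkernel
  simp_rw [mul_div_assoc, integral_const_mul, hkernel, rsinc]
  field_simp
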